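/- Let d > 0, h, l ≥ 1, fix x ∈ ℝ^l and centers c_{ij} ∈ ℝ (1 ≤ i ≤ h, 1 ≤ j ≤ l), and let δ ∈ (0,1) and k ≥ 1. Let U₁ and U₂ be independent random h×l matrices whose entries are all independent, with the (i,j) entry of each uniformly distributed on [c_{ij} − d/2, c_{ij} + d/2]. Then with probability at least 1 − δ/k, ‖(U₂ − U₁)x‖₂ ≤ d ‖x‖₂ √(h log(2hk/δ)). -/

import Mathlib

open MeasureTheory

/-- The Euclidean (ℓ²) norm of a vector in `Fin n → ℝ`. -/
noncomputable def l2norm {n : ℕ} (v : Fin n → ℝ) : ℝ :=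
  Real.sqrt (∑ i, (v i) ^ 2)

/-- The uniform probability distribution on the interval `[a, b]`. -/
noncomputable def unif (a b : ℝ) : Measure ℝ :=
  (ENNReal.ofReal (b - a))⁻¹ • volume.restrict (Set.Icc a b)

/-- The law of a random `h × l` matrix whose entries are independent, with the
`(i,j)` entry uniform on the interval of length `d` centered at `c i j`. -/
noncomputable def matrixUnif {hd ld : ℕ} (c : Fin hd → Fin ld → ℝ) (d : ℝ) :
    Measure (Fin hd → Fin ld → ℝ) :=
  Measure.pi fun i => Measure.pi fun j => unif (c i j - d / 2) (c i j + d / 2)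

/-! Row `i` of `(U₂ - U₁) x` is `∑ⱼ ((U₂)ᵢⱼ xⱼ - mᵢⱼ) - ∑ⱼ ((U₁)ᵢⱼ xⱼ - mᵢⱼ)`, where `mᵢⱼ` is the
common mean of `(U₁)ᵢⱼ xⱼ` and `(U₂)ᵢⱼ xⱼ`: a sum of `2l` independent centred terms, the `j`-th
ranging over an interval of length `d |xⱼ|`. By Hoeffding's lemma the row is sub-Gaussian with
variance proxy `d² ‖x‖² / 2`, so the Chernoff bound gives `|row i| > d ‖x‖ √L` with probability at
most `2 e^{-L} = δ / (h k)` for `L = log (2 h k / δ)`. Off the union of these `h` events, every row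
is at most `d ‖x‖ √L` in absolute value, hence `‖(U₂ - U₁) x‖₂ ≤ √h · d ‖x‖ √L`. -/

open ProbabilityTheory
open scoped NNReal

namespace ProbabilityTheory.HasSubgaussianMGF

section Pi

variable {ι : Type*} [Fintype ι] {Ω : ι → Type*} [∀ i, MeasurableSpace (Ω i)]
  {μ : ∀ i, Measure (Ω i)} [∀ i, IsProbabilityMeasure (μ i)]

lemma comp_eval {i : ι} {X : Ω i → ℝ} {c : ℝ≥0} (h : HasSubgaussianMGF X c (μ i)) :
    HasSubgaussianMGF (fun ω => X (ω i)) c (Measure.pi μ) :=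
  of_map (measurable_pi_apply i).aemeasurable (by rwa [(measurePreserving_eval μ i).map_eq])

lemma sum_pi {X : ∀ i, Ω i → ℝ} {c : ι → ℝ≥0}
    (h : ∀ i, HasSubgaussianMGF (X i) (c i) (μ i)) :
    HasSubgaussianMGF (fun ω => ∑ i, X i (ω i)) (∑ i, c i) (Measure.pi μ) :=
  sum_of_iIndepFun (iIndepFun_pi fun i => (h i).aemeasurable) fun i _ => (h i).comp_eval

end Pi

variable {Ω Ω' : Type*} [MeasurableSpace Ω] [MeasurableSpace Ω']

lemma add_prod {μ : Measure Ω} {ν : Measure Ω'} [IsProbabilityMeasure μ] [IsProbabilityMeasure ν]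
    {X : Ω → ℝ} {Y : Ω' → ℝ} {cX cY : ℝ≥0}
    (hX : HasSubgaussianMGF X cX μ) (hY : HasSubgaussianMGF Y cY ν) :
    HasSubgaussianMGF (fun ω => X ω.1 + Y ω.2) (cX + cY) (μ.prod ν) := by
  have hX' : HasSubgaussianMGF (fun ω : Ω × Ω' => X ω.1) cX (μ.prod ν) :=
    of_map measurable_fst.aemeasurable (by rwa [measurePreserving_fst.map_eq])
  have hY' : HasSubgaussianMGF (fun ω : Ω × Ω' => Y ω.2) cY (μ.prod ν) :=
    of_map measurable_snd.aemeasurable (by rwa [measurePreserving_snd.map_eq])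
  exact hX'.add_of_indepFun hY' (indepFun_prod₀ hX.aemeasurable hY.aemeasurable)

lemma measureReal_le_abs_le {μ : Measure Ω} [IsFiniteMeasure μ] {X : Ω → ℝ} {c : ℝ≥0}
    (h : HasSubgaussianMGF X c μ) {ε : ℝ} (hε : 0 ≤ ε) :
    μ.real {ω | ε ≤ |X ω|} ≤ 2 * Real.exp (-ε ^ 2 / (2 * c)) :=
  calc μ.real {ω | ε ≤ |X ω|} ≤ μ.real ({ω | ε ≤ X ω} ∪ {ω | ε ≤ (-X) ω}) :=
        measureReal_mono fun ω (hω : ε ≤ |X ω|) => (le_abs.1 hω :)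
    _ ≤ μ.real {ω | ε ≤ X ω} + μ.real {ω | ε ≤ (-X) ω} := measureReal_union_le _ _
    _ ≤ 2 * Real.exp (-ε ^ 2 / (2 * c)) := by
        linarith [h.measure_ge_le hε, h.neg.measure_ge_le hε]

end ProbabilityTheory.HasSubgaussianMGF

lemma l2norm_nonneg {n : ℕ} (v : Fin n → ℝ) : 0 ≤ l2norm v := Real.sqrt_nonneg _

lemma isProbabilityMeasure_unif {a b : ℝ} (h : a < b) : IsProbabilityMeasure (unif a b) := by
  constructor
  rw [unif, Measure.smul_apply, Measure.restrict_apply MeasurableSet.univ, Set.univ_inter,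
    Real.volume_Icc, smul_eq_mul, ENNReal.inv_mul_cancel (by simp [h]) ENNReal.ofReal_ne_top]

lemma ae_mem_Icc_unif (a b : ℝ) : ∀ᵐ y ∂unif a b, y ∈ Set.Icc a b :=
  Measure.ae_smul_measure (ae_restrict_mem measurableSet_Icc) _

lemma hasSubgaussianMGF_unif (m a : ℝ) {d : ℝ} (hd' : 0 < d) :
    HasSubgaussianMGF (fun y => a * y - ∫ z, a * z ∂unif (m - d / 2) (m + d / 2))
      ((‖a * d‖₊ / 2) ^ 2) (unif (m - d / 2) (m + d / 2)) := by
  have := isProbabilityMeasure_unif (show m - d / 2 < m + d / 2 by linarith)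
  have hmem : ∀ᵐ y ∂unif (m - d / 2) (m + d / 2),
      a * y ∈ Set.Icc (a * m - |a * d| / 2) (a * m + |a * d| / 2) := by
    filter_upwards [ae_mem_Icc_unif _ _] with y hy
    have hym : |y - m| ≤ d / 2 := abs_le.2 ⟨by linarith [hy.1], by linarith [hy.2]⟩
    have : |a * y - a * m| ≤ |a * d| / 2 := by
      rw [← mul_sub, abs_mul, abs_mul, abs_of_pos hd', mul_div_assoc]
      exact mul_le_mul_of_nonneg_left hym (abs_nonneg a)
    constructor <;> linarith [abs_le.1 this]
  convert hasSubgaussianMGF_of_mem_Icc (by fun_prop) hmem using 3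
  rw [add_sub_sub_cancel, add_halves, Real.nnnorm_abs]

section MatrixUnif

variable {hd ld : ℕ} {c : Fin hd → Fin ld → ℝ} {d : ℝ}

lemma isProbabilityMeasure_matrixUnif (hd' : 0 < d) : IsProbabilityMeasure (matrixUnif c d) := by
  have : ∀ i j, IsProbabilityMeasure (unif (c i j - d / 2) (c i j + d / 2)) :=
    fun i j => isProbabilityMeasure_unif (by linarith)
  unfold matrixUnif
  infer_instance

lemma hasSubgaussianMGF_rowDiff (hd' : 0 < d) (x : Fin ld → ℝ) (i : Fin hd) :
    HasSubgaussianMGF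
      (fun U : (Fin hd → Fin ld → ℝ) × (Fin hd → Fin ld → ℝ) => ∑ j, (U.2 i j - U.1 i j) * x j)
      (2 * ∑ j, (‖x j * d‖₊ / 2) ^ 2) ((matrixUnif c d).prod (matrixUnif c d)) := by
  have : ∀ i j, IsProbabilityMeasure (unif (c i j - d / 2) (c i j + d / 2)) :=
    fun i j => isProbabilityMeasure_unif (by linarith)
  set Z : (Fin ld → ℝ) → ℝ :=
    fun u => ∑ j, (x j * u j - ∫ z, x j * z ∂unif (c i j - d / 2) (c i j + d / 2))
  have hZ : HasSubgaussianMGF (fun U : Fin hd → Fin ld → ℝ => Z (U i))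
      (∑ j, (‖x j * d‖₊ / 2) ^ 2) (matrixUnif c d) :=
    (HasSubgaussianMGF.sum_pi fun j => hasSubgaussianMGF_unif (c i j) (x j) hd').comp_eval
  have := isProbabilityMeasure_matrixUnif (c := c) hd'
  rw [two_mul]
  refine (hZ.neg.add_prod hZ).congr (ae_of_all _ fun U => ?_)
  simp only [Z, Pi.neg_apply, ← Finset.sum_neg_distrib, ← Finset.sum_add_distrib]
  exact Finset.sum_congr rfl fun j _ => by ring

lemma measureReal_lt_abs_rowDiff_le (hd' : 0 < d) (x : Fin ld → ℝ) (i : Fin hd) {L : ℝ}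
    (hL : 0 ≤ L) :
    ((matrixUnif c d).prod (matrixUnif c d)).real
        {U | d * l2norm x * √L < |∑ j, (U.2 i j - U.1 i j) * x j|} ≤ 2 * Real.exp (-L) := by
  have := isProbabilityMeasure_matrixUnif (c := c) hd'
  rcases eq_or_ne x 0 with rfl | hx
  · simp [l2norm, Real.exp_nonneg]
  have hX : 0 < ∑ j, x j ^ 2 := by
    obtain ⟨j, hj⟩ := Function.ne_iff.1 hx
    exact Finset.sum_pos' (fun j _ => sq_nonneg (x j)) ⟨j, Finset.mem_univ j, sq_pos_of_ne_zero hj⟩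
  have hε : 0 ≤ d * l2norm x * √L := by have := l2norm_nonneg x; positivity
  refine (measureReal_mono (Set.ofPred_subset_ofPred.2 fun U => le_of_lt)).trans
    (((hasSubgaussianMGF_rowDiff hd' x i).measureReal_le_abs_le hε).trans_eq ?_)
  congr 2
  push_cast
  simp only [l2norm, mul_pow, Real.sq_sqrt hX.le, Real.sq_sqrt hL, div_pow, norm_mul,
    Real.norm_eq_abs, sq_abs, ← Finset.sum_div, ← Finset.sum_mul]
  field_simp

end MatrixUnif

lemma l2norm_le_sqrt_mul_of_forall_abs_le {n : ℕ} {v : Fin n → ℝ} {s : ℝ} (hs : 0 ≤ s)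
    (hv : ∀ i, |v i| ≤ s) : l2norm v ≤ √n * s :=
  calc l2norm v ≤ √(∑ _i : Fin n, s ^ 2) :=
        Real.sqrt_le_sqrt <| Finset.sum_le_sum fun i _ =>
          sq_le_sq' (abs_le.1 (hv i)).1 (abs_le.1 (hv i)).2
    _ = √n * s := by simp [Real.sqrt_sq hs]

lemma ofReal_one_sub_le_measure_l2norm_le {Ω : Type*} [MeasurableSpace Ω] (μ : Measure Ω)
    [IsProbabilityMeasure μ] {n : ℕ} (Y : Ω → Fin n → ℝ) {s ε : ℝ} (hs : 0 ≤ s)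
    (hY : ∀ i, μ.real {ω | s < |Y ω i|} ≤ ε) :
    ENNReal.ofReal (1 - n * ε) ≤ μ {ω | l2norm (Y ω) ≤ √n * s} := by
  set E := {ω | l2norm (Y ω) ≤ √n * s}
  have hEc : Eᶜ ⊆ ⋃ i, {ω | s < |Y ω i|} := fun ω hω => by
    by_contra h
    simp only [Set.mem_iUnion, Set.mem_ofPred_eq, not_exists, not_lt] at h
    exact hω (l2norm_le_sqrt_mul_of_forall_abs_le hs h)
  have hbad : μ.real Eᶜ ≤ n * ε :=
    calc μ.real Eᶜ ≤ ∑ i, μ.real {ω | s < |Y ω i|} :=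
          (measureReal_mono hEc).trans (measureReal_iUnion_fintype_le _)
      _ ≤ n * ε := (Finset.sum_le_sum fun i (_ : i ∈ Finset.univ) => hY i).trans_eq (by simp)
  have hcover : 1 ≤ μ.real E + μ.real Eᶜ := by
    simpa [Set.union_compl_self] using measureReal_union_le (μ := μ) E Eᶜ
  rw [← ofReal_measureReal]
  exact ENNReal.ofReal_le_ofReal (by linarith)

theorem matrix_difference_concentration_general {hd ld : ℕ}
    (hhd : 1 ≤ hd) (d : ℝ) (hd' : 0 < d)
    (x : Fin ld → ℝ) (c : Fin hd → Fin ld → ℝ)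
    (δ : ℝ) (hδ : δ ∈ Set.Ioo (0:ℝ) 1) (k : ℝ) (hk : 1 ≤ k) :
    ENNReal.ofReal (1 - δ / k) ≤
      (matrixUnif c d).prod (matrixUnif c d)
        {Up : (Fin hd → Fin ld → ℝ) × (Fin hd → Fin ld → ℝ) |
          l2norm (fun i => ∑ j, (Up.2 i j - Up.1 i j) * x j)
            ≤ d * l2norm x * Real.sqrt (hd * Real.log (2 * hd * k / δ))} := by
  obtain ⟨hδ0, hδ1⟩ := hδ
  have hn : (1 : ℝ) ≤ hd := by exact_mod_cast hhd
  have := isProbabilityMeasure_matrixUnif (c := c) hd'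
  have hL : 0 ≤ Real.log (2 * hd * k / δ) :=
    Real.log_nonneg (by rw [le_div_iff₀ hδ0]; nlinarith)
  generalize hLdef : Real.log (2 * hd * k / δ) = L at hL ⊢
  have hrow (i : Fin hd) : ((matrixUnif c d).prod (matrixUnif c d)).real
      {Up | d * l2norm x * √L < |∑ j, (Up.2 i j - Up.1 i j) * x j|} ≤ δ / (hd * k) := by
    refine (measureReal_lt_abs_rowDiff_le hd' x i hL).trans_eq ?_
    rw [← hLdef, Real.exp_neg, Real.exp_log (by positivity)]
    field_simp
  have hs : 0 ≤ d * l2norm x * √L := by have := l2norm_nonneg x; positivity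
  have hconc := ofReal_one_sub_le_measure_l2norm_le ((matrixUnif c d).prod (matrixUnif c d))
    (fun Up i => ∑ j, (Up.2 i j - Up.1 i j) * x j) hs hrow
  have hfailure : (hd : ℝ) * (δ / (hd * k)) = δ / k := by field_simp
  have hthreshold : √hd * (d * l2norm x * √L) = d * l2norm x * √(hd * L) := by
    rw [Real.sqrt_mul (by positivity)]
    ring
  rwa [hfailure, hthreshold] at hconc

/-- concentration bound (proof:expand_6) in the proof of Theorem 1.
For independent random matrices `U₁, U₂` with independent entries, the `(i,j)` entry
of each uniform on `[c i j − d/2, c i j + d/2]`, with probability at least `1 − δ/k`: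
`‖(U₂ − U₁)x‖₂ ≤ d ‖x‖₂ √(h log(2hk/δ))`. -/
theorem matrix_difference_concentration {hd ld : ℕ}
    (hhd : 1 ≤ hd) (hld : 1 ≤ ld) (d : ℝ) (hd' : 0 < d)
    (x : Fin ld → ℝ) (c : Fin hd → Fin ld → ℝ)
    (δ : ℝ) (hδ : δ ∈ Set.Ioo (0:ℝ) 1) (k : ℝ) (hk : 1 ≤ k) :
    ENNReal.ofReal (1 - δ / k) ≤
      (matrixUnif c d).prod (matrixUnif c d)
        {Up : (Fin hd → Fin ld → ℝ) × (Fin hd → Fin ld → ℝ) |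
          l2norm (fun i => ∑ j, (Up.2 i j - Up.1 i j) * x j)
            ≤ d * l2norm x * Real.sqrt (hd * Real.log (2 * hd * k / δ))} :=
  matrix_difference_concentration_general hhd d hd' x c δ hδ k hk
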